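/- Let T be a proper d-tiling in general position with d > 1 and |T| > 1, and let X be the (unique) box of T containing the point (−1,…,−1). Then there exist i ∈ {1,…,d} and a box Y ∈ T such that X_i^+ = Y_i^- and X_j^+ = Y_j^+ for all j ≠ i. -/

import Mathlib

/- Common framework: axis-parallel boxes (with extended-real endpoints, to
accommodate the unbounded exterior boxes of `T_ext`), `d`-tilings of the cube
`[-1,1]^d`, the exterior boxes, proper tilings, slices, cuts, sides and
separations. -/

noncomputable section

open Classical

attribute [local instance] Classical.propDecidable

/-- A `d`-box, given by the lower and upper endpoints of its coordinate
intervals (extended reals, so that the unbounded exterior boxes are covered).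
The interval in coordinate `i` is `[lo i, hi i]`. -/
structure Box (d : ℕ) where
  lo : Fin d → EReal
  hi : Fin d → EReal

namespace Box

variable {d : ℕ}

/-- Membership of a (real) point in a box. -/
def mem (B : Box d) (p : Fin d → ℝ) : Prop :=
  ∀ i, B.lo i ≤ (p i : EReal) ∧ (p i : EReal) ≤ B.hi i

/-- The set of real points of a box. -/
def toSet (B : Box d) : Set (Fin d → ℝ) := {p | B.mem p}

/-- The interior of a box (for full-dimensional boxes). -/
def interior (B : Box d) : Set (Fin d → ℝ) :=
  {p | ∀ i, B.lo i < (p i : EReal) ∧ (p i : EReal) < B.hi i}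

/-- The dimension of a box: the number of non-degenerate coordinate
intervals. -/
def dim (B : Box d) : ℕ :=
  (Finset.univ.filter fun i => B.lo i < B.hi i).card

/-- A box is full-dimensional (`d`-dimensional) if all of its coordinate
intervals are non-degenerate. -/
def FullDim (B : Box d) : Prop := ∀ i, B.lo i < B.hi i

end Box

/-- Two boxes intersect when they share a (real) point. -/
def Intersects {d : ℕ} (A B : Box d) : Prop := (A.toSet ∩ B.toSet).Nonempty

/-- The dimension of the intersection `A ∩ B` of two boxes: the number of
coordinates `i` where the interval `A_i ∩ B_i` is non-degenerate. -/
def interDim {d : ℕ} (A B : Box d) : ℕ :=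
  (Finset.univ.filter fun i =>
    max (A.lo i) (B.lo i) < min (A.hi i) (B.hi i)).card

/-- Two intersecting boxes touch in dimension `i` when `A_i ∩ B_i` is
degenerate. -/
def Touch {d : ℕ} (A B : Box d) (i : Fin d) : Prop :=
  Intersects A B ∧ max (A.lo i) (B.lo i) = min (A.hi i) (B.hi i)

/-- The cube `[-1,1]^d`. -/
def cube (d : ℕ) : Set (Fin d → ℝ) := {p | ∀ i, -1 ≤ p i ∧ p i ≤ 1}

/-- A `d`-tiling: a finite collection of full-dimensional `d`-boxes contained
in `[-1,1]^d`, with pairwise disjoint interiors, whose union is `[-1,1]^d`. -/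
def IsTiling {d : ℕ} (𝒯 : Finset (Box d)) : Prop :=
  (∀ B ∈ 𝒯, B.FullDim) ∧
  (∀ B ∈ 𝒯, B.toSet ⊆ cube d) ∧
  (∀ A ∈ 𝒯, ∀ B ∈ 𝒯, A ≠ B → A.interior ∩ B.interior = ∅) ∧
  (∀ p ∈ cube d, ∃ B ∈ 𝒯, B.mem p)

/-- The exterior box `T(i,-)` (for `s = false`) resp. `T(i,+)`
(for `s = true`). -/
def extBox (d : ℕ) (i : Fin d) (s : Bool) : Box d where
  lo j := if j < i then ((-1 : ℝ) : EReal)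
          else if j = i then (if s then ((1 : ℝ) : EReal) else ⊥) else ⊥
  hi j := if j < i then ((1 : ℝ) : EReal)
          else if j = i then (if s then ⊤ else ((-1 : ℝ) : EReal)) else ⊤

/-- The family `T_ext` of the `2d` exterior boxes. -/
def extBoxes (d : ℕ) : Finset (Box d) :=
  (Finset.univ : Finset (Fin d × Bool)).image fun q => extBox d q.1 q.2

/-- The collection `T ∪ T_ext`. -/
def withExt {d : ℕ} (𝒯 : Finset (Box d)) : Finset (Box d) := 𝒯 ∪ extBoxes d

/-- A `d`-tiling is proper when every point of `ℝ^d` belongs to at most `d+1`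
boxes of `T ∪ T_ext`. -/
def Proper {d : ℕ} (𝒯 : Finset (Box d)) : Prop :=
  ∀ p : Fin d → ℝ, ((withExt 𝒯).filter fun B => B.mem p).card ≤ d + 1

/-- The hyperplane `H^(i)_x` is generic w.r.t. `𝒯` when `x` is not an endpoint
of the `i`-th interval of any box of `𝒯`. -/
def Generic {d : ℕ} (𝒯 : Finset (Box d)) (i : Fin d) (x : ℝ) : Prop :=
  ∀ B ∈ 𝒯, (x : EReal) ≠ B.lo i ∧ (x : EReal) ≠ B.hi i

/-- The slice `B|^(i)_x` of a box `B` by the hyperplane `H^(i)_x`, regarded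
as a box of `ℝ^d` by omitting coordinate `i`. -/
def sliceBox {d : ℕ} (B : Box (d + 1)) (i : Fin (d + 1)) : Box d where
  lo j := B.lo (i.succAbove j)
  hi j := B.hi (i.succAbove j)

/-- The slice `T|^(i)_x` of a tiling by the hyperplane `H^(i)_x`. -/
def sliceT {d : ℕ} (𝒯 : Finset (Box (d + 1))) (i : Fin (d + 1)) (x : ℝ) :
    Finset (Box d) :=
  (𝒯.filter fun B => B.lo i ≤ (x : EReal) ∧ (x : EReal) ≤ B.hi i).image
    fun B => sliceBox B i

/-- The box `B|^(i)-_x` (the nontrivial cases: if `B_i^+ < x` it is `B`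
itself, and if `B_i^- < x ≤ B_i^+` the interval `B_i` is replaced by
`[B_i^-, 1]`; the empty case `x ≤ B_i^-` is filtered out in `cutMinus`). -/
def cutMinusBox {d : ℕ} (B : Box d) (i : Fin d) (x : ℝ) : Box d :=
  if B.hi i < (x : EReal) then B
  else ⟨B.lo, Function.update B.hi i ((1 : ℝ) : EReal)⟩

/-- The box `B|^(i)+_x` (the nontrivial cases: if `x < B_i^-` it is `B`
itself, and if `B_i^- ≤ x < B_i^+` the interval `B_i` is replaced by
`[-1, B_i^+]`; the empty case `B_i^+ ≤ x` is filtered out in `cutPlus`). -/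
def cutPlusBox {d : ℕ} (B : Box d) (i : Fin d) (x : ℝ) : Box d :=
  if (x : EReal) < B.lo i then B
  else ⟨Function.update B.lo i ((-1 : ℝ) : EReal), B.hi⟩

/-- The collection `T|^(i)-_x` of nonempty boxes `B|^(i)-_x`, `B ∈ T`. -/
def cutMinus {d : ℕ} (𝒯 : Finset (Box d)) (i : Fin d) (x : ℝ) :
    Finset (Box d) :=
  (𝒯.filter fun B => B.lo i < (x : EReal)).image fun B => cutMinusBox B i x

/-- The collection `T|^(i)+_x` of nonempty boxes `B|^(i)+_x`, `B ∈ T`. -/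
def cutPlus {d : ℕ} (𝒯 : Finset (Box d)) (i : Fin d) (x : ℝ) :
    Finset (Box d) :=
  (𝒯.filter fun B => (x : EReal) < B.hi i).image fun B => cutPlusBox B i x

/-- The side `S(B,i,-)` (for `s = false`) resp. `S(B,i,+)` (for `s = true`)
of a box `B`. -/
def sideBox {d : ℕ} (B : Box d) (i : Fin d) (s : Bool) : Box d where
  lo j := if j = i then (if s then B.hi i else B.lo i) else B.lo j
  hi j := if j = i then (if s then B.hi i else B.lo i) else B.hi j

/-- The set of all sides of boxes of `T ∪ T_ext`. -/
def sides {d : ℕ} (𝒯 : Finset (Box d)) : Finset (Box d) :=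
  ((withExt 𝒯) ×ˢ (Finset.univ : Finset (Fin d × Bool))).image
    fun q => sideBox q.1 q.2.1 q.2.2

/-- Two sides are linked when they intersect on a `(d-1)`-dimensional box. -/
def Linked {d : ℕ} (S S' : Box d) : Prop :=
  Intersects S S' ∧ interDim S S' = d - 1

/-- The linking relation, restricted to the sides of `T ∪ T_ext`. -/
def linkRel {d : ℕ} (𝒯 : Finset (Box d)) (S S' : Box d) : Prop :=
  S ∈ sides 𝒯 ∧ S' ∈ sides 𝒯 ∧ Linked S S'

/-- The `∼`-equivalence class of a side (sides reachable by chains of linked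
sides). -/
def sepClass {d : ℕ} (𝒯 : Finset (Box d)) (S₀ : Box d) : Set (Box d) :=
  {S | Relation.ReflTransGen (linkRel 𝒯) S₀ S}

/-- The separation generated by a side `S₀`: the union of the sides in its
`∼`-equivalence class. -/
def sepSet {d : ℕ} (𝒯 : Finset (Box d)) (S₀ : Box d) : Set (Fin d → ℝ) :=
  ⋃ S ∈ sepClass 𝒯 S₀, S.toSet

/-- `S` is degenerate in dimension `i` with value `x`, i.e. it is contained in
the hyperplane `H^(i)_x`. -/
def DegenAt {d : ℕ} (S : Box d) (i : Fin d) (x : ℝ) : Prop :=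
  S.lo i = (x : EReal) ∧ S.hi i = (x : EReal)

/-- A tiling is in general position when no two distinct separations are
coplanar: any two sides whose separations lie in a common hyperplane
`H^(i)_x` are `∼`-equivalent. -/
def GeneralPosition {d : ℕ} (𝒯 : Finset (Box d)) : Prop :=
  ∀ S₀ ∈ sides 𝒯, ∀ S₁ ∈ sides 𝒯, ∀ (i : Fin d) (x : ℝ),
    DegenAt S₀ i x → DegenAt S₁ i x →
      Relation.ReflTransGen (linkRel 𝒯) S₀ S₁

/-- The dimension of the intersection `⋂_{B ∈ 𝓑} B` of a finite family of
boxes: the number of coordinates where the intersected interval is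
non-degenerate. -/
def interDimAll {d : ℕ} (𝓑 : Finset (Box d)) : ℕ :=
  (Finset.univ.filter fun i =>
    𝓑.sup (fun B => B.lo i) < 𝓑.inf (fun B => B.hi i)).card

/-- The digraph `G(T)`: an arc from `A` to `B` (for distinct `A, B ∈ T`) iff
`B_i^- < A_i^+` for all `i`. -/
def tilingArc {d : ℕ} (𝒯 : Finset (Box d)) (A B : Box d) : Prop :=
  A ∈ 𝒯 ∧ B ∈ 𝒯 ∧ A ≠ B ∧ ∀ i, B.lo i < A.hi i

/-!
Let `c` be the upper corner of `X`; every `c j > -1`. An orthant at `c` pointing into the cube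
is given by the set `S ⊆ J = {j | c j < 1}` of its upward coordinates. Each such orthant is
filled near `c` by exactly one tile, and a tile through `c` fills `2 ^ k` of them, where `k`
counts the coordinates `j` in which `c j` lies strictly inside the tile's interval. `X` fills only `S = ∅`.
For each `i ∈ J` the tile filling `{i}` has `c` on its lower facet in coordinate `i` and in no
other; these `#J` tiles, `X`, and the exterior boxes `T(j,+)` with `c j = 1` are already `d + 1`
boxes through `c`, so by properness there are no further tiles through `c`. If none of the `#J`
tiles had the required shape, each would fill an even number of orthants, and
`2 ^ #J = 1 + (even)` forces `J = ∅`; then `X` is the whole cube, contradicting `|T| > 1`.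
-/

open Finset Filter Topology

namespace Box

variable {d : ℕ} {B : Box d} {c : Fin d → ℝ}

lemma isClosed_toSet (B : Box d) : IsClosed B.toSet := by
  have hcont : ∀ j : Fin d, Continuous fun p : Fin d → ℝ => ((p j : ℝ) : EReal) :=
    fun j => continuous_coe_real_ereal.comp (continuous_apply j)
  have : B.toSet = ⋂ j, ({p | B.lo j ≤ p j} ∩ {p | (p j : EReal) ≤ B.hi j}) := by
    ext p
    simp [toSet, mem, forall_and]
  rw [this]
  exact isClosed_iInter fun j =>
    (isClosed_le continuous_const (hcont j)).inter (isClosed_le (hcont j) continuous_const)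

lemma exists_mem_apply_eq (hB : B.FullDim) {j : Fin d} {x : ℝ}
    (hlo : B.lo j < x) (hhi : (x : EReal) < B.hi j) : ∃ p, B.mem p ∧ p j = x := by
  choose q hq using fun k => EReal.exists_between_coe_real (hB k)
  refine ⟨Function.update q j x, fun k => ?_, Function.update_self ..⟩
  rcases eq_or_ne k j with rfl | hk
  · simpa using ⟨hlo.le, hhi.le⟩
  · simpa [hk] using ⟨(hq k).1.le, (hq k).2.le⟩

def loAt (B : Box d) (c : Fin d → ℝ) : Finset (Fin d) := univ.filter fun j => B.lo j = c j

def hiAt (B : Box d) (c : Fin d → ℝ) : Finset (Fin d) := univ.filter fun j => B.hi j = c j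

/- An orthant at `c` is encoded by the set `S` of coordinates in which it points upwards;
a box containing `c` meets every neighbourhood of `c` in the interior of that orthant iff
`S ∈ Icc (B.loAt c) (B.hiAt c)ᶜ`. -/
lemma mem_Icc_loAt_compl_hiAt (hc : B.mem c) {S : Finset (Fin d)} :
    S ∈ Icc (B.loAt c) (B.hiAt c)ᶜ ↔
      ∀ j, (j ∈ S → (c j : EReal) < B.hi j) ∧ (j ∉ S → B.lo j < c j) := by
  simp only [mem_Icc, subset_iff, mem_compl, loAt, hiAt, mem_filter, mem_univ, true_and]
  constructor
  · rintro ⟨hlo, hhi⟩ j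
    exact ⟨fun hj => (hc j).2.lt_of_ne' (hhi hj),
      fun hj => (hc j).1.lt_of_ne fun h => hj (hlo h)⟩
  · intro h
    exact ⟨fun {j} hj => by_contra fun hS => (h j).2 hS |>.ne hj,
      fun {j} hS hj => (h j).1 hS |>.ne' hj⟩

lemma loAt_subset_compl_hiAt (hB : B.FullDim) (c : Fin d → ℝ) :
    B.loAt c ⊆ (B.hiAt c)ᶜ := by
  intro j hj
  rw [mem_compl]
  intro hj'
  simp only [loAt, hiAt, mem_filter, mem_univ, true_and] at hj hj'
  exact (hB j).ne (hj.trans hj'.symm)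

lemma mem_of_hi_eq (hB : B.FullDim) (hc : ∀ j, B.hi j = c j) : B.mem c :=
  fun j => ⟨(hB j).le.trans (hc j).le, (hc j).ge⟩

lemma loAt_eq_empty_of_hi_eq (hB : B.FullDim) (hc : ∀ j, B.hi j = c j) : B.loAt c = ∅ :=
  filter_eq_empty_iff.mpr fun j _ h => (hB j).ne (h.trans (hc j).symm)

lemma hiAt_eq_univ_of_hi_eq (hc : ∀ j, B.hi j = c j) : B.hiAt c = univ :=
  filter_true_of_mem fun j _ => hc j

lemma even_two_pow_of_loAt_eq_singleton (hB : B.FullDim) {i j : Fin d} (hi : B.loAt c = {i})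
    (hji : j ≠ i) (hj : B.hi j ≠ c j) : Even (2 ^ (#(B.hiAt c)ᶜ - #(B.loAt c))) := by
  have hij : {i, j} ⊆ (B.hiAt c)ᶜ := by
    refine insert_subset (loAt_subset_compl_hiAt hB c (hi ▸ mem_singleton_self i)) ?_
    simpa [hiAt] using hj
  have := card_le_card hij
  rw [card_pair hji.symm] at this
  rw [hi, card_singleton]
  exact Nat.even_pow.mpr ⟨even_two, by omega⟩

end Box

section Exterior

variable {d : ℕ}

lemma extBox_true_hi_eq_top_iff {i j : Fin d} : (extBox d i true).hi j = ⊤ ↔ i ≤ j := by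
  simp only [extBox, if_true, ite_self]
  split_ifs with h
  · exact iff_of_false (EReal.coe_ne_top 1) (not_le.mpr h)
  · simpa using h

lemma extBox_true_injective : Function.Injective (extBox d · true) := by
  intro i i' (h : extBox d i true = extBox d i' true)
  have hle : ∀ j, i ≤ j ↔ i' ≤ j := fun j => by
    rw [← extBox_true_hi_eq_top_iff, ← extBox_true_hi_eq_top_iff, h]
  exact le_antisymm ((hle i').mpr le_rfl) ((hle i).mp le_rfl)

lemma extBox_true_mem {p : Fin d → ℝ} (hp : p ∈ cube d) {i : Fin d} (hi : p i = 1) :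
    (extBox d i true).mem p := by
  intro j
  simp only [extBox, if_true, ite_self]
  split_ifs with hji hji'
  · exact ⟨EReal.coe_le_coe_iff.mpr (hp j).1, EReal.coe_le_coe_iff.mpr (hp j).2⟩
  · subst hji'
    exact ⟨by rw [hi], le_top⟩
  · exact ⟨bot_le, le_top⟩

end Exterior

namespace IsTiling

variable {d : ℕ} {𝒯 : Finset (Box d)} {X Z : Box d} {c : Fin d → ℝ}

lemma neg_one_le_lo (hT : IsTiling 𝒯) {B : Box d} (hB : B ∈ 𝒯) (j : Fin d) :
    ((-1 : ℝ) : EReal) ≤ B.lo j := by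
  by_contra! h
  obtain ⟨x, hx, hx'⟩ := EReal.exists_between_coe_real (lt_min h (hT.1 B hB j))
  obtain ⟨p, hp, rfl⟩ := Box.exists_mem_apply_eq (hT.1 B hB) hx (lt_min_iff.mp hx').2
  have := (hT.2.1 B hB hp j).1
  exact this.not_gt (EReal.coe_lt_coe_iff.mp (lt_min_iff.mp hx').1)

lemma hi_le_one (hT : IsTiling 𝒯) {B : Box d} (hB : B ∈ 𝒯) (j : Fin d) :
    B.hi j ≤ ((1 : ℝ) : EReal) := by
  by_contra! h
  obtain ⟨x, hx, hx'⟩ := EReal.exists_between_coe_real (max_lt h (hT.1 B hB j))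
  obtain ⟨p, hp, rfl⟩ := Box.exists_mem_apply_eq (hT.1 B hB) (max_lt_iff.mp hx).2 hx'
  have := (hT.2.1 B hB hp j).2
  exact this.not_gt (EReal.coe_lt_coe_iff.mp (max_lt_iff.mp hx).1)

lemma exists_hi_eq_coe (hT : IsTiling 𝒯) (hX : X ∈ 𝒯) :
    ∃ c : Fin d → ℝ, ∀ j, X.hi j = c j ∧ -1 < c j ∧ c j ≤ 1 := by
  have h : ∀ j, ∃ x : ℝ, X.hi j = x ∧ -1 < x ∧ x ≤ 1 := fun j => by
    have hlo : ((-1 : ℝ) : EReal) < X.hi j := (hT.neg_one_le_lo hX j).trans_lt (hT.1 X hX j)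
    have hhi := hT.hi_le_one hX j
    generalize X.hi j = y at hlo hhi
    induction y using EReal.rec with
    | bot => exact absurd hlo not_lt_bot
    | coe x => exact ⟨x, rfl, by exact_mod_cast hlo, by exact_mod_cast hhi⟩
    | top => exact absurd hhi (EReal.coe_lt_top 1).not_ge
  choose c hc using h
  exact ⟨c, hc⟩

lemma eq_of_forall_max_lo_lt_min_hi (hT : IsTiling 𝒯) {A B : Box d} (hA : A ∈ 𝒯)
    (hB : B ∈ 𝒯) (h : ∀ j, max (A.lo j) (B.lo j) < min (A.hi j) (B.hi j)) : A = B := by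
  by_contra hne
  choose q hq using fun j => EReal.exists_between_coe_real (h j)
  have hqA : q ∈ A.interior := fun j =>
    ⟨(le_max_left _ _).trans_lt (hq j).1, (hq j).2.trans_le (min_le_left _ _)⟩
  have hqB : q ∈ B.interior := fun j =>
    ⟨(le_max_right _ _).trans_lt (hq j).1, (hq j).2.trans_le (min_le_right _ _)⟩
  exact (hT.2.2.1 A hA B hB hne).subset ⟨hqA, hqB⟩

lemma eq_of_lo_le_neg_one_of_one_le_hi (hT : IsTiling 𝒯) (hX : X ∈ 𝒯) (hZ : Z ∈ 𝒯)
    (hlo : ∀ j, X.lo j ≤ ((-1 : ℝ) : EReal)) (hhi : ∀ j, ((1 : ℝ) : EReal) ≤ X.hi j) :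
    Z = X :=
  hT.eq_of_forall_max_lo_lt_min_hi hZ hX fun j => by
    rw [max_eq_left ((hlo j).trans (hT.neg_one_le_lo hZ j)),
      min_eq_left ((hT.hi_le_one hZ j).trans (hhi j))]
    exact hT.1 Z hZ j

/- Leave `c` along a diagonal of the orthant `S`: the path eventually stays in the cube, so
some tile contains points of it arbitrarily close to `c`, and by closedness contains `c`. -/
lemma exists_mem_Icc_loAt_compl_hiAt (hT : IsTiling 𝒯) (hc : c ∈ cube d)
    {S : Finset (Fin d)} (hS : ∀ j ∈ S, c j < 1) (hSc : ∀ j ∉ S, -1 < c j) :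
    ∃ Z ∈ 𝒯, Z.mem c ∧ S ∈ Icc (Z.loAt c) (Z.hiAt c)ᶜ := by
  set γ : ℝ → Fin d → ℝ := fun ε j => if j ∈ S then c j + ε else c j - ε
  have hγ : Tendsto γ (𝓝[>] 0) (𝓝 c) := by
    have : Continuous γ := continuous_pi fun j => by
      by_cases h : j ∈ S <;> simp only [γ, h, if_true, if_false] <;> fun_prop
    simpa [γ] using (this.tendsto 0).mono_left nhdsWithin_le_nhds
  have hpos : ∀ᶠ ε in 𝓝[>] (0 : ℝ), 0 < ε := self_mem_nhdsWithin
  have hcube : ∀ᶠ ε in 𝓝[>] 0, γ ε ∈ cube d := by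
    simp only [cube, Set.mem_ofPred_eq, eventually_all]
    intro j
    have hj := tendsto_pi_nhds.mp hγ j
    by_cases h : j ∈ S
    · filter_upwards [hpos, hj.eventually (gt_mem_nhds (hS j h))] with ε hε h1
      simp only [γ, if_pos h] at h1 ⊢
      constructor <;> linarith [(hc j).1]
    · filter_upwards [hpos, hj.eventually (lt_mem_nhds (hSc j h))] with ε hε h1
      simp only [γ, if_neg h] at h1 ⊢
      constructor <;> linarith [(hc j).2]
  have hfreq : ∃ᶠ ε in 𝓝[>] 0, ∃ Z ∈ 𝒯, 0 < ε ∧ Z.mem (γ ε) :=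
    ((hpos.and hcube).mono fun ε hε =>
      (hT.2.2.2 _ hε.2).imp fun _ hZ => ⟨hZ.1, hε.1, hZ.2⟩).frequently
  obtain ⟨Z, hZ, hfreqZ⟩ := frequently_exists_finset 𝒯 |>.mp hfreq
  have hcZ : Z.mem c :=
    Z.isClosed_toSet.mem_of_frequently_of_tendsto (hfreqZ.mono fun _ h => h.2) hγ
  obtain ⟨ε, hε, hεZ⟩ := hfreqZ.exists
  refine ⟨Z, hZ, hcZ, (Box.mem_Icc_loAt_compl_hiAt hcZ).mpr fun j =>
    ⟨fun hj => ?_, fun hj => ?_⟩⟩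
  · have := (hεZ j).2
    simp only [γ, if_pos hj] at this
    exact (EReal.coe_lt_coe_iff.mpr (by linarith)).trans_le this
  · have := (hεZ j).1
    simp only [γ, if_neg hj] at this
    exact this.trans_lt (EReal.coe_lt_coe_iff.mpr (by linarith))

lemma eq_of_mem_Icc_loAt_compl_hiAt (hT : IsTiling 𝒯) {Z' : Box d} (hZ : Z ∈ 𝒯)
    (hZ' : Z' ∈ 𝒯) (hcZ : Z.mem c) (hcZ' : Z'.mem c) {S : Finset (Fin d)}
    (hS : S ∈ Icc (Z.loAt c) (Z.hiAt c)ᶜ) (hS' : S ∈ Icc (Z'.loAt c) (Z'.hiAt c)ᶜ) :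
    Z = Z' := by
  rw [Box.mem_Icc_loAt_compl_hiAt hcZ] at hS
  rw [Box.mem_Icc_loAt_compl_hiAt hcZ'] at hS'
  refine hT.eq_of_forall_max_lo_lt_min_hi hZ hZ' fun j => ?_
  by_cases hj : j ∈ S
  · exact (max_le (hcZ j).1 (hcZ' j).1).trans_lt (lt_min ((hS j).1 hj) ((hS' j).1 hj))
  · exact (max_lt ((hS j).2 hj) ((hS' j).2 hj)).trans_le (le_min (hcZ j).2 (hcZ' j).2)

/- The orthants at `c` that point into the cube are partitioned among the tiles containing `c`. -/
theorem two_pow_card_eq_sum (hT : IsTiling 𝒯) (hc : ∀ j, -1 < c j ∧ c j ≤ 1) :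
    2 ^ #(univ.filter fun j => c j < 1) =
      ∑ Z ∈ 𝒯.filter (·.mem c), 2 ^ (#(Z.hiAt c)ᶜ - #(Z.loAt c)) := by
  have hcube : c ∈ cube d := fun j => ⟨(hc j).1.le, (hc j).2⟩
  have hpart : (univ.filter fun j => c j < 1).powerset =
      (𝒯.filter (·.mem c)).biUnion fun Z => Icc (Z.loAt c) (Z.hiAt c)ᶜ := by
    ext S
    simp only [mem_powerset, mem_biUnion, mem_filter]
    constructor
    · intro hS
      obtain ⟨Z, hZ, hcZ, hSZ⟩ := hT.exists_mem_Icc_loAt_compl_hiAt hcube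
        (fun j hj => (mem_filter.mp (hS hj)).2) fun j _ => (hc j).1
      exact ⟨Z, ⟨hZ, hcZ⟩, hSZ⟩
    · rintro ⟨Z, ⟨hZ, hcZ⟩, hSZ⟩ j hj
      have := ((Box.mem_Icc_loAt_compl_hiAt hcZ).mp hSZ j).1 hj
      simp only [mem_filter, mem_univ, true_and]
      exact EReal.coe_lt_coe_iff.mp (this.trans_le (hT.hi_le_one hZ j))
  rw [← card_powerset, hpart, card_biUnion]
  · exact sum_congr rfl fun Z hZ =>
      card_Icc_finset (Box.loAt_subset_compl_hiAt (hT.1 Z (mem_filter.mp hZ).1) c)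
  · intro Z hZ Z' hZ' hne
    simp only [coe_filter, Set.mem_ofPred_eq] at hZ hZ'
    exact disjoint_left.mpr fun _ hS hS' =>
      hne (hT.eq_of_mem_Icc_loAt_compl_hiAt hZ.1 hZ'.1 hZ.2 hZ'.2 hS hS')

lemma extBox_true_notMem (hT : IsTiling 𝒯) (i : Fin d) : extBox d i true ∉ 𝒯 := fun h =>
  (EReal.coe_lt_top 1).not_ge (extBox_true_hi_eq_top_iff.mpr le_rfl ▸ hT.hi_le_one h i)

/- The exterior boxes `T(j,+)` with `c j = 1` also contain `c`. -/
lemma card_filter_mem_le (hT : IsTiling 𝒯) (hP : Proper 𝒯) (hc : c ∈ cube d) :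
    #(𝒯.filter (·.mem c)) ≤ #(univ.filter fun j => c j < 1) + 1 := by
  set E := (univ.filter fun j => ¬ c j < 1).image (extBox d · true)
  have hsub : 𝒯.filter (·.mem c) ∪ E ⊆ (withExt 𝒯).filter (·.mem c) := by
    intro B hB
    rcases mem_union.mp hB with hB | hB
    · exact mem_filter.mpr ⟨mem_union_left _ (mem_filter.mp hB).1, (mem_filter.mp hB).2⟩
    · obtain ⟨i, hi, rfl⟩ := mem_image.mp hB
      refine mem_filter.mpr ⟨mem_union_right _ (mem_image_of_mem
        (fun q : Fin d × Bool => extBox d q.1 q.2) (mem_univ (i, true))), extBox_true_mem hc ?_⟩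
      exact le_antisymm (hc i).2 (not_lt.mp (mem_filter.mp hi).2)
  have hdisj : Disjoint (𝒯.filter (·.mem c)) E := disjoint_left.mpr fun B hB hBE => by
    obtain ⟨i, -, rfl⟩ := mem_image.mp hBE
    exact hT.extBox_true_notMem i (mem_filter.mp hB).1
  have hcard := (card_le_card hsub).trans (hP c)
  rw [card_union_of_disjoint hdisj, card_image_of_injective _ extBox_true_injective] at hcard
  have hsplit := card_filter_add_card_filter_not (s := univ) (p := fun j => c j < 1)
  rw [card_univ, Fintype.card_fin] at hsplit
  omega

lemma exists_loAt_eq_singleton (hT : IsTiling 𝒯) (hX : X ∈ 𝒯) (hXc : ∀ j, X.hi j = c j)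
    (hc : ∀ j, -1 < c j ∧ c j ≤ 1) {i : Fin d} (hi : c i < 1) :
    ∃ Y ∈ 𝒯, Y.mem c ∧ Y.loAt c = {i} := by
  obtain ⟨Y, hY, hcY, hiY⟩ := hT.exists_mem_Icc_loAt_compl_hiAt (S := {i})
    (fun j => ⟨(hc j).1.le, (hc j).2⟩) (by simpa using hi) fun j _ => (hc j).1
  refine ⟨Y, hY, hcY,
    (subset_singleton_iff.mp (mem_Icc.mp hiY).1).resolve_left fun hYempty => ?_⟩
  -- otherwise `Y` also occupies the orthant `∅`, which belongs to `X`
  have hXY : Y = X := by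
    refine hT.eq_of_mem_Icc_loAt_compl_hiAt hY hX hcY (Box.mem_of_hi_eq (hT.1 X hX) hXc)
      (S := ∅) ?_ ?_
    · simp [hYempty]
    · simp [Box.loAt_eq_empty_of_hi_eq (hT.1 X hX) hXc]
  have hi' := (mem_Icc.mp hiY).2 (mem_singleton_self i)
  rw [hXY, Box.hiAt_eq_univ_of_hi_eq hXc] at hi'
  exact notMem_compl.mpr (mem_univ i) hi'

lemma eq_or_loAt_eq_singleton (hT : IsTiling 𝒯) (hP : Proper 𝒯) (hX : X ∈ 𝒯)
    (hXc : ∀ j, X.hi j = c j) (hc : ∀ j, -1 < c j ∧ c j ≤ 1) (hZ : Z ∈ 𝒯)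
    (hcZ : Z.mem c) : Z = X ∨ ∃ i, Z.loAt c = {i} := by
  set J := univ.filter fun j => c j < 1
  have : Nonempty (Box d) := ⟨X⟩
  choose! Y hY hcY hYi using fun i (hi : i ∈ J) =>
    hT.exists_loAt_eq_singleton hX hXc hc (mem_filter.mp hi).2
  have hXJ : X ∉ J.image Y := fun h => by
    obtain ⟨i, hi, hYX⟩ := mem_image.mp h
    have := hYi i hi
    rw [hYX, Box.loAt_eq_empty_of_hi_eq (hT.1 X hX) hXc] at this
    exact singleton_ne_empty i this.symm
  have hsub : insert X (J.image Y) ⊆ 𝒯.filter (·.mem c) := by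
    refine insert_subset (mem_filter.mpr ⟨hX, Box.mem_of_hi_eq (hT.1 X hX) hXc⟩) ?_
    intro B hB
    obtain ⟨i, hi, rfl⟩ := mem_image.mp hB
    exact mem_filter.mpr ⟨hY i hi, hcY i hi⟩
  have hcard : #(insert X (J.image Y)) = #J + 1 := by
    refine (card_insert_of_notMem hXJ).trans (congrArg (· + 1) (card_image_of_injOn ?_))
    intro i hi i' hi' (h : Y i = Y i')
    exact singleton_injective ((hYi i hi).symm.trans (h ▸ hYi i' hi'))
  have heq := eq_of_subset_of_card_le hsub
    (hcard ▸ hT.card_filter_mem_le hP fun j => ⟨(hc j).1.le, (hc j).2⟩)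
  have hZ' : Z ∈ insert X (J.image Y) := heq ▸ mem_filter.mpr ⟨hZ, hcZ⟩
  rcases mem_insert.mp hZ' with h | h
  · exact Or.inl h
  · obtain ⟨i, hi, rfl⟩ := mem_image.mp h
    exact Or.inr ⟨i, hYi i hi⟩

theorem exists_adjacent_of_hi_ne_one (hT : IsTiling 𝒯) (hP : Proper 𝒯)
    (hX : X ∈ 𝒯) (hX1 : X.hi ≠ fun _ => ((1 : ℝ) : EReal)) :
    ∃ i : Fin d, ∃ Y ∈ 𝒯, X.hi i = Y.lo i ∧ ∀ j, j ≠ i → X.hi j = Y.hi j := by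
  obtain ⟨c, hc⟩ := hT.exists_hi_eq_coe hX
  have hXc : ∀ j, X.hi j = c j := fun j => (hc j).1
  by_contra! hne
  have heven : ∀ Z ∈ (𝒯.filter (·.mem c)).erase X,
      Even (2 ^ (#(Z.hiAt c)ᶜ - #(Z.loAt c))) := by
    intro Z hZ
    obtain ⟨hZX, hZ, hcZ⟩ : Z ≠ X ∧ Z ∈ 𝒯 ∧ Z.mem c := by simpa using hZ
    obtain ⟨i, hi⟩ :=
      (hT.eq_or_loAt_eq_singleton hP hX hXc (fun j => (hc j).2) hZ hcZ).resolve_left hZX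
    have hZi : Z.lo i = c i := (mem_filter.mp (hi ▸ mem_singleton_self i : i ∈ Z.loAt c)).2
    obtain ⟨j, hji, hj⟩ := hne i Z hZ ((hXc i).trans hZi.symm)
    exact Box.even_two_pow_of_loAt_eq_singleton (hT.1 Z hZ) hi hji
      fun h => hj ((hXc j).trans h.symm)
  have hJ : (univ.filter fun j => c j < 1).Nonempty := by
    obtain ⟨j, hj⟩ := Function.ne_iff.mp hX1
    refine ⟨j, mem_filter.mpr ⟨mem_univ j, (hc j).2.2.lt_of_ne fun h => hj ?_⟩⟩
    rw [hXc, h]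
  have hsum := hT.two_pow_card_eq_sum fun j => (hc j).2
  rw [← add_sum_erase _ _ (mem_filter.mpr ⟨hX, Box.mem_of_hi_eq (hT.1 X hX) hXc⟩),
    Box.hiAt_eq_univ_of_hi_eq hXc, compl_univ, card_empty, Nat.zero_sub, pow_zero] at hsum
  have h2 : Even (2 ^ #(univ.filter fun j => c j < 1)) :=
    Nat.even_pow.mpr ⟨even_two, hJ.card_pos.ne'⟩
  rw [hsum] at h2
  exact Nat.not_even_one ((Nat.even_add.mp h2).mpr (even_sum _ heven))

end IsTiling

theorem stmt15_general (d : ℕ) (𝒯 : Finset (Box d)) (hT : IsTiling 𝒯)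
    (hP : Proper 𝒯) (hcard : 1 < 𝒯.card)
    (X : Box d) (hX : X ∈ 𝒯) (hXmem : X.mem fun _ => (-1 : ℝ)) :
    ∃ i : Fin d, ∃ Y ∈ 𝒯,
      X.hi i = Y.lo i ∧ ∀ j, j ≠ i → X.hi j = Y.hi j := by
  refine hT.exists_adjacent_of_hi_ne_one hP hX fun hX1 => hcard.not_ge ?_
  have hall : ∀ Z ∈ 𝒯, Z = X := fun Z hZ =>
    hT.eq_of_lo_le_neg_one_of_one_le_hi hX hZ (fun j => (hXmem j).1) fun j => (congrFun hX1 j).ge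
  exact card_le_one.mpr fun A hA B hB => (hall A hA).trans (hall B hB).symm

/-- Let `T` be a proper `d`-tiling in general position with
`d > 1` and `|T| > 1`, and let `X ∈ T` be the box containing `(-1,…,-1)`.
Then there are `i ∈ {1,…,d}` and `Y ∈ T` with `X_i^+ = Y_i^-` and
`X_j^+ = Y_j^+` for all `j ≠ i`. -/
theorem stmt15 (d : ℕ) (hd : 1 < d) (𝒯 : Finset (Box d)) (hT : IsTiling 𝒯)
    (hP : Proper 𝒯) (hgen : GeneralPosition 𝒯) (hcard : 1 < 𝒯.card)
    (X : Box d) (hX : X ∈ 𝒯) (hXmem : X.mem fun _ => (-1 : ℝ)) :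
    ∃ i : Fin d, ∃ Y ∈ 𝒯,
      X.hi i = Y.lo i ∧ ∀ j, j ≠ i → X.hi j = Y.hi j :=
  stmt15_general d 𝒯 hT hP hcard X hX hXmem

end
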